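/- Let A be a locally finite subset of a Banach space Z containing 0, with Zᵢ = span{a ∈ A : ‖a‖ ≤ 2ⁱ} and Sᵢ = {a ∈ A : 2^{i−1} ≤ ‖a‖ ≤ 2ⁱ}. Let Y be a Banach space with a Schauder decomposition (Yᵢ) satisfying ‖yⱼ‖ ≤ ‖Σᵢ yᵢ‖ for yᵢ ∈ Yᵢ, and let Eᵢ : Zᵢ → Y be linear isometries onto Yᵢ (composed with inclusion). Define φ : A → Y by φ(a) = ((2ⁱ−‖a‖)/2^{i−1}) Eᵢ(a) + ((‖a‖−2^{i−1})/2^{i−1}) E_{i+1}(a) for a ∈ Sᵢ. Then φ is well defined (consistent when ‖a‖ = 2ⁱ) and is a Lipschitz embedding: there are constants 0 < c ≤ C < ∞ with c‖a−b‖ ≤ ‖φ(a)−φ(b)‖ ≤ C‖a−b‖ for all a,b ∈ A. -/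

import Mathlib

/-!
The coefficient of `E i` in `φ a` is `hat (‖a‖ / 2 ^ i)`, where `hat` is the tent on `[1/4, 1]`
with peak `1` at `1/2`. These coefficients form a partition of unity with at most two nonzero
terms, so `a` splits into pieces `hat (‖a‖ / 2 ^ i) • a ∈ Zᵢ` and `φ a = ∑ᵢ Eᵢ (piece i a)`.
For `a, b ∈ A` the components of `φ a - φ b` are `Eᵢ (piece i a - piece i b)`, at most four of
them nonzero. By monotonicity each is bounded by `‖φ a - φ b‖`, and the pieces of `a - b` add
up to `a - b`, so `‖a - b‖ ≤ 4 ‖φ a - φ b‖`. Conversely the `i`-th coefficient is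
`4 / 2 ^ i`-Lipschitz in `‖a‖` and vanishes beyond `2 ^ i`, which bounds each piece of the
difference by `(hat + hat + 4) ‖a - b‖` and gives `‖φ a - φ b‖ ≤ 18 ‖a - b‖`.
-/

open Finset

def hat (x : ℝ) : ℝ := max 0 (min (4 * x - 1) (2 - 2 * x))

lemma hat_nonneg (x : ℝ) : 0 ≤ hat x := le_max_left _ _

lemma hat_eq_zero_of_le {x : ℝ} (hx : x ≤ 1 / 4) : hat x = 0 :=
  max_eq_left (min_le_of_left_le (by linarith))

lemma hat_eq_zero_of_one_le {x : ℝ} (hx : 1 ≤ x) : hat x = 0 :=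
  max_eq_left (min_le_of_right_le (by linarith))

lemma hat_of_le_half {x : ℝ} (h₁ : 1 / 4 ≤ x) (h₂ : x ≤ 1 / 2) : hat x = 4 * x - 1 := by
  rw [hat, min_eq_left (by linarith), max_eq_right (by linarith)]

lemma hat_of_half_le {x : ℝ} (h₁ : 1 / 2 ≤ x) (h₂ : x ≤ 1) : hat x = 2 - 2 * x := by
  rw [hat, min_eq_right (by linarith), max_eq_right (by linarith)]

lemma abs_hat_sub_hat_le (x y : ℝ) : |hat x - hat y| ≤ 4 * |x - y| := by
  have h₄ : |4 * x - 1 - (4 * y - 1)| = 4 * |x - y| := by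
    rw [show 4 * x - 1 - (4 * y - 1) = 4 * (x - y) by ring, abs_mul, abs_of_pos four_pos]
  have h₂ : |2 - 2 * x - (2 - 2 * y)| ≤ 4 * |x - y| := by
    rw [show 2 - 2 * x - (2 - 2 * y) = -2 * (x - y) by ring, abs_mul]
    norm_num
    linarith [abs_nonneg (x - y)]
  calc |hat x - hat y|
      ≤ max |0 - 0| |min (4 * x - 1) (2 - 2 * x) - min (4 * y - 1) (2 - 2 * y)| :=
        abs_max_sub_max_le_max _ _ _ _
    _ ≤ 4 * |x - y| :=
        max_le (by simp [abs_nonneg]) ((abs_min_sub_min_le_max _ _ _ _).trans (max_le h₄.le h₂))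

section Dyadic

variable {t : ℝ} {i j : ℤ}

lemma two_zpow_pos (i : ℤ) : (0 : ℝ) < 2 ^ i := zpow_pos two_pos i

lemma two_zpow_sub_one (i : ℤ) : (2 : ℝ) ^ (i - 1) = 2 ^ i / 2 := by
  rw [zpow_sub_one₀ two_ne_zero, div_eq_mul_inv]

lemma hat_div_zpow_eq_zero_of_le (h : 2 ^ j ≤ t) : hat (t / 2 ^ j) = 0 :=
  hat_eq_zero_of_one_le ((one_le_div (two_zpow_pos j)).2 h)

lemma hat_div_zpow_eq_zero_of_nonpos (ht : t ≤ 0) : hat (t / 2 ^ j) = 0 :=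
  hat_eq_zero_of_le ((div_nonpos_of_nonpos_of_nonneg ht (two_zpow_pos j).le).trans (by norm_num))

lemma hat_div_zpow_self (h₁ : 2 ^ (i - 1) ≤ t) (h₂ : t ≤ 2 ^ i) :
    hat (t / 2 ^ i) = (2 ^ i - t) / 2 ^ (i - 1) := by
  have hp := two_zpow_pos i
  rw [two_zpow_sub_one] at h₁ ⊢
  rw [hat_of_half_le ((le_div_iff₀ hp).2 (by linarith)) ((div_le_one hp).2 h₂)]
  field_simp

lemma hat_div_zpow_succ (h₁ : 2 ^ (i - 1) ≤ t) (h₂ : t ≤ 2 ^ i) :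
    hat (t / 2 ^ (i + 1)) = (t - 2 ^ (i - 1)) / 2 ^ (i - 1) := by
  have hp := two_zpow_pos i
  rw [two_zpow_sub_one] at h₁ ⊢
  rw [zpow_add_one₀ two_ne_zero, hat_of_le_half ((le_div_iff₀ (by positivity)).2 (by linarith))
    ((div_le_iff₀ (by positivity)).2 (by linarith))]
  field_simp
  ring

lemma hat_div_zpow_eq_zero (h₁ : 2 ^ (i - 1) ≤ t) (h₂ : t ≤ 2 ^ i) (hj : j ≠ i)
    (hj' : j ≠ i + 1) : hat (t / 2 ^ j) = 0 := by
  rcases lt_or_gt_of_ne hj with hj | hj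
  · exact hat_div_zpow_eq_zero_of_le
      ((zpow_le_zpow_right₀ one_le_two (by omega)).trans h₁)
  · have h4 : (2 : ℝ) ^ (i + 2) ≤ 2 ^ j := zpow_le_zpow_right₀ one_le_two (by omega)
    rw [zpow_add₀ two_ne_zero] at h4
    exact hat_eq_zero_of_le ((div_le_iff₀ (two_zpow_pos j)).2 (by norm_num at h4; linarith))

noncomputable def dyadicSupport (t : ℝ) : Finset ℤ := {Int.clog 2 t, Int.clog 2 t + 1}

lemma two_zpow_clog_sub_one_le (ht : 0 < t) : 2 ^ (Int.clog 2 t - 1) ≤ t := by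
  exact_mod_cast (Int.zpow_pred_clog_lt_self one_lt_two ht).le

lemma le_two_zpow_clog (t : ℝ) : t ≤ 2 ^ Int.clog 2 t := by
  exact_mod_cast Int.self_le_zpow_clog one_lt_two t

lemma hat_div_zpow_eq_zero_of_notMem (hj : j ∉ dyadicSupport t) : hat (t / 2 ^ j) = 0 := by
  rcases le_or_gt t 0 with ht | ht
  · exact hat_div_zpow_eq_zero_of_nonpos ht
  · simp only [dyadicSupport, mem_insert, mem_singleton, not_or] at hj
    exact hat_div_zpow_eq_zero (two_zpow_clog_sub_one_le ht) (le_two_zpow_clog t) hj.1 hj.2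

lemma sum_hat_div_zpow_eq_one (ht : 0 < t) {s : Finset ℤ} (hs : dyadicSupport t ⊆ s) :
    ∑ j ∈ s, hat (t / 2 ^ j) = 1 := by
  rw [← sum_subset hs fun j _ hj => hat_div_zpow_eq_zero_of_notMem hj, dyadicSupport,
    sum_pair (by omega), hat_div_zpow_self (two_zpow_clog_sub_one_le ht) (le_two_zpow_clog t),
    hat_div_zpow_succ (two_zpow_clog_sub_one_le ht) (le_two_zpow_clog t), ← add_div,
    div_eq_one_iff_eq (two_zpow_pos _).ne', two_zpow_sub_one]
  ring

lemma sum_hat_div_zpow_le_one (t : ℝ) (s : Finset ℤ) : ∑ j ∈ s, hat (t / 2 ^ j) ≤ 1 := by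
  rcases le_or_gt t 0 with ht | ht
  · simp [hat_div_zpow_eq_zero_of_nonpos ht]
  · calc ∑ j ∈ s, hat (t / 2 ^ j) ≤ ∑ j ∈ s ∪ dyadicSupport t, hat (t / 2 ^ j) :=
          sum_le_sum_of_subset_of_nonneg subset_union_left fun _ _ _ => hat_nonneg _
      _ = 1 := sum_hat_div_zpow_eq_one ht subset_union_right

lemma card_union_dyadicSupport_le (s t : ℝ) : #(dyadicSupport s ∪ dyadicSupport t) ≤ 4 :=
  (card_union_le _ _).trans (add_le_add card_le_two card_le_two)

end Dyadic

section Pieces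

variable {Z : Type*} [NormedAddCommGroup Z] [NormedSpace ℝ Z]

lemma norm_smul_sub_smul_le {r s : ℝ} (hr : 0 ≤ r) (x y : Z) :
    ‖r • x - s • y‖ ≤ r * ‖x - y‖ + |r - s| * ‖y‖ := by
  calc ‖r • x - s • y‖ = ‖r • (x - y) + (r - s) • y‖ := by congr 1; module
    _ ≤ r * ‖x - y‖ + |r - s| * ‖y‖ := by
      grw [norm_add_le, norm_smul, norm_smul, Real.norm_of_nonneg hr, Real.norm_eq_abs]

lemma abs_hat_div_sub_hat_div_mul_le {c : ℝ} (hc : 0 < c) (s t : ℝ) :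
    |hat (s / c) - hat (t / c)| * c ≤ 4 * |s - t| := by
  calc |hat (s / c) - hat (t / c)| * c ≤ 4 * |s / c - t / c| * c := by
        gcongr; exact abs_hat_sub_hat_le _ _
    _ = 4 * |s - t| := by rw [← sub_div, abs_div, abs_of_pos hc]; field_simp

noncomputable def dyadicPiece (i : ℤ) (a : Z) : Z := hat (‖a‖ / 2 ^ i) • a

lemma dyadicPiece_eq_zero_of_notMem {i : ℤ} {a : Z} (hi : i ∉ dyadicSupport ‖a‖) :
    dyadicPiece i a = 0 := by
  rw [dyadicPiece, hat_div_zpow_eq_zero_of_notMem hi, zero_smul]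

lemma sum_dyadicPiece {a : Z} {s : Finset ℤ} (hs : dyadicSupport ‖a‖ ⊆ s) :
    ∑ i ∈ s, dyadicPiece i a = a := by
  rcases eq_or_ne a 0 with rfl | ha
  · simp [dyadicPiece]
  · simp only [dyadicPiece]
    rw [← sum_smul, sum_hat_div_zpow_eq_one (norm_pos_iff.2 ha) hs, one_smul]

lemma norm_dyadicPiece_sub_le (i : ℤ) (a b : Z) :
    ‖dyadicPiece i a - dyadicPiece i b‖ ≤
      (hat (‖a‖ / 2 ^ i) + hat (‖b‖ / 2 ^ i) + 4) * ‖a - b‖ := by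
  -- Expand around the point of smaller norm: if that norm is at least `2 ^ i` both
  -- coefficients vanish, otherwise the Lipschitz bound gets multiplied by at most `2 ^ i`.
  wlog hba : ‖b‖ ≤ ‖a‖ generalizing a b
  · rw [norm_sub_rev, norm_sub_rev a, add_comm (hat _)]
    exact this b a (le_of_not_ge hba)
  rcases le_or_gt (2 ^ i) ‖b‖ with hb | hb
  · simp [dyadicPiece, hat_div_zpow_eq_zero_of_le hb, hat_div_zpow_eq_zero_of_le (hb.trans hba)]
  have hΔ : |hat (‖a‖ / 2 ^ i) - hat (‖b‖ / 2 ^ i)| * ‖b‖ ≤ 4 * ‖a - b‖ :=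
    calc _ ≤ |hat (‖a‖ / 2 ^ i) - hat (‖b‖ / 2 ^ i)| * 2 ^ i := by gcongr
      _ ≤ 4 * |‖a‖ - ‖b‖| := abs_hat_div_sub_hat_div_mul_le (two_zpow_pos i) _ _
      _ ≤ 4 * ‖a - b‖ := by gcongr; exact abs_norm_sub_norm_le a b
  calc _ ≤ hat (‖a‖ / 2 ^ i) * ‖a - b‖ + |hat (‖a‖ / 2 ^ i) - hat (‖b‖ / 2 ^ i)| * ‖b‖ :=
        norm_smul_sub_smul_le (hat_nonneg _) a b
    _ ≤ _ := by nlinarith [hat_nonneg (‖b‖ / 2 ^ i), norm_nonneg (a - b)]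

lemma sum_norm_dyadicPiece_sub_le (s : Finset ℤ) (a b : Z) :
    ∑ i ∈ s, ‖dyadicPiece i a - dyadicPiece i b‖ ≤ (2 + 4 * #s) * ‖a - b‖ := by
  calc _ ≤ ∑ i ∈ s, (hat (‖a‖ / 2 ^ i) + hat (‖b‖ / 2 ^ i) + 4) * ‖a - b‖ :=
        sum_le_sum fun i _ => norm_dyadicPiece_sub_le i a b
    _ = (∑ i ∈ s, hat (‖a‖ / 2 ^ i) + ∑ i ∈ s, hat (‖b‖ / 2 ^ i) + 4 * #s) * ‖a - b‖ := by
        rw [← sum_mul, sum_add_distrib, sum_add_distrib, sum_const, nsmul_eq_mul, mul_comm 4]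
    _ ≤ (2 + 4 * #s) * ‖a - b‖ := by
        gcongr
        linarith [sum_hat_div_zpow_le_one ‖a‖ s, sum_hat_div_zpow_le_one ‖b‖ s]

lemma norm_sub_le_sum_norm_dyadicPiece_sub {a b : Z} {s : Finset ℤ}
    (ha : dyadicSupport ‖a‖ ⊆ s) (hb : dyadicSupport ‖b‖ ⊆ s) :
    ‖a - b‖ ≤ ∑ i ∈ s, ‖dyadicPiece i a - dyadicPiece i b‖ := by
  conv_lhs => rw [← sum_dyadicPiece ha, ← sum_dyadicPiece hb, ← sum_sub_distrib]
  exact norm_sum_le _ _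

end Pieces

section Gluing

variable {Z Y : Type*} [NormedAddCommGroup Z] [NormedSpace ℝ Z]
  [NormedAddCommGroup Y] [NormedSpace ℝ Y]

def IsMonotoneDecomposition (Ysub : ℤ → Submodule ℝ Y) : Prop :=
  ∀ y : ℤ → Y, (∀ i, y i ∈ Ysub i) → Summable y → ∀ j : ℤ, ‖y j‖ ≤ ‖∑' i, y i‖

lemma IsMonotoneDecomposition.sum_norm_le {Ysub : ℤ → Submodule ℝ Y}
    (hY : IsMonotoneDecomposition Ysub) {y : ℤ → Y} (hy : ∀ i, y i ∈ Ysub i) {s : Finset ℤ}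
    (hs : ∀ i ∉ s, y i = 0) : ∑ i ∈ s, ‖y i‖ ≤ #s * ‖∑ i ∈ s, y i‖ := by
  rw [← tsum_eq_sum (L := SummationFilter.unconditional ℤ) hs]
  simpa using sum_le_card_nsmul s _ _ fun i _ => hY y hy (summable_of_ne_finset_zero hs) i

section ZeroExtend

variable {p : Submodule ℝ Z} {f : p →ₗ[ℝ] Y}

open scoped Classical in
noncomputable def zeroExtend (p : Submodule ℝ Z) (f : p →ₗ[ℝ] Y) (z : Z) : Y :=
  if h : z ∈ p then f ⟨z, h⟩ else 0

lemma zeroExtend_of_mem {z : Z} (hz : z ∈ p) : zeroExtend p f z = f ⟨z, hz⟩ := dif_pos hz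

@[simp]
lemma zeroExtend_zero : zeroExtend p f 0 = 0 := by
  rw [zeroExtend_of_mem p.zero_mem]
  exact f.map_zero

lemma zeroExtend_sub {z w : Z} (hz : z ∈ p) (hw : w ∈ p) :
    zeroExtend p f (z - w) = zeroExtend p f z - zeroExtend p f w := by
  rw [zeroExtend_of_mem (p.sub_mem hz hw), zeroExtend_of_mem hz, zeroExtend_of_mem hw, ← map_sub]
  rfl

lemma zeroExtend_mem {q : Submodule ℝ Y} (hf : ∀ z, f z ∈ q) (z : Z) : zeroExtend p f z ∈ q := by
  by_cases hz : z ∈ p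
  · rw [zeroExtend_of_mem hz]; exact hf _
  · rw [zeroExtend, dif_neg hz]; exact q.zero_mem

lemma norm_zeroExtend (hf : ∀ z, ‖f z‖ = ‖(z : Z)‖) {z : Z} (hz : z ∈ p) :
    ‖zeroExtend p f z‖ = ‖z‖ := by
  rw [zeroExtend_of_mem hz, hf]

end ZeroExtend

variable (Zsub : ℤ → Submodule ℝ Z) (E : ∀ i, Zsub i →ₗ[ℝ] Y)

noncomputable def gluing (a : Z) : Y :=
  ∑' i, zeroExtend (Zsub i) (E i) (dyadicPiece i a)

lemma gluing_zero : gluing Zsub E 0 = 0 := by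
  simp [gluing, dyadicPiece]

lemma gluing_eq {a : Z} {i : ℤ} (h₁ : 2 ^ (i - 1) ≤ ‖a‖) (h₂ : ‖a‖ ≤ 2 ^ i)
    (hi : a ∈ Zsub i) (hi' : a ∈ Zsub (i + 1)) :
    gluing Zsub E a = ((2 ^ i - ‖a‖) / 2 ^ (i - 1)) • E i ⟨a, hi⟩
      + ((‖a‖ - 2 ^ (i - 1)) / 2 ^ (i - 1)) • E (i + 1) ⟨a, hi'⟩ := by
  have hsupp : ∀ j ∉ ({i, i + 1} : Finset ℤ), zeroExtend (Zsub j) (E j) (dyadicPiece j a) = 0 := by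
    intro j hj
    simp only [mem_insert, mem_singleton, not_or] at hj
    rw [dyadicPiece, hat_div_zpow_eq_zero h₁ h₂ hj.1 hj.2, zero_smul, zeroExtend_zero]
  rw [gluing, tsum_eq_sum hsupp, sum_pair (by omega), dyadicPiece, dyadicPiece,
    zeroExtend_of_mem (Submodule.smul_mem _ _ hi), zeroExtend_of_mem (Submodule.smul_mem _ _ hi'),
    hat_div_zpow_self h₁ h₂, hat_div_zpow_succ h₁ h₂, ← map_smul, ← map_smul]
  rfl

lemma zeroExtend_dyadicPiece_eq_zero {a : Z} {i : ℤ} (hi : i ∉ dyadicSupport ‖a‖) :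
    zeroExtend (Zsub i) (E i) (dyadicPiece i a) = 0 := by
  rw [dyadicPiece_eq_zero_of_notMem hi, zeroExtend_zero]

variable {Zsub}

lemma dyadicPiece_mem {A : Set Z} (hZ : ∀ i : ℤ, ∀ a ∈ A, ‖a‖ ≤ 2 ^ i → a ∈ Zsub i) {a : Z}
    (ha : a ∈ A) (i : ℤ) : dyadicPiece i a ∈ Zsub i := by
  rcases le_or_gt (2 ^ i) ‖a‖ with h | h
  · rw [dyadicPiece, hat_div_zpow_eq_zero_of_le h, zero_smul]
    exact (Zsub i).zero_mem
  · exact (Zsub i).smul_mem _ (hZ i a ha h.le)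

lemma gluing_sub_gluing {A : Set Z} (hZ : ∀ i : ℤ, ∀ a ∈ A, ‖a‖ ≤ 2 ^ i → a ∈ Zsub i)
    {a b : Z} (ha : a ∈ A) (hb : b ∈ A) :
    gluing Zsub E a - gluing Zsub E b =
      ∑ i ∈ dyadicSupport ‖a‖ ∪ dyadicSupport ‖b‖,
        zeroExtend (Zsub i) (E i) (dyadicPiece i a - dyadicPiece i b) := by
  rw [gluing, gluing, tsum_eq_sum fun i hi => zeroExtend_dyadicPiece_eq_zero Zsub E hi,
    tsum_eq_sum fun i hi => zeroExtend_dyadicPiece_eq_zero Zsub E hi,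
    sum_subset subset_union_left fun i _ hi => zeroExtend_dyadicPiece_eq_zero Zsub E hi,
    sum_subset subset_union_right fun i _ hi => zeroExtend_dyadicPiece_eq_zero Zsub E hi,
    ← sum_sub_distrib]
  exact sum_congr rfl fun i _ =>
    (zeroExtend_sub (dyadicPiece_mem hZ ha i) (dyadicPiece_mem hZ hb i)).symm

lemma norm_zeroExtend_dyadicPiece_sub (hE : ∀ i z, ‖E i z‖ = ‖(z : Z)‖) {A : Set Z}
    (hZ : ∀ i : ℤ, ∀ a ∈ A, ‖a‖ ≤ 2 ^ i → a ∈ Zsub i) {a b : Z} (ha : a ∈ A) (hb : b ∈ A)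
    (i : ℤ) : ‖zeroExtend (Zsub i) (E i) (dyadicPiece i a - dyadicPiece i b)‖ =
      ‖dyadicPiece i a - dyadicPiece i b‖ :=
  norm_zeroExtend (hE i) (sub_mem (dyadicPiece_mem hZ ha i) (dyadicPiece_mem hZ hb i))

lemma norm_gluing_sub_le (hE : ∀ i z, ‖E i z‖ = ‖(z : Z)‖) {A : Set Z}
    (hZ : ∀ i : ℤ, ∀ a ∈ A, ‖a‖ ≤ 2 ^ i → a ∈ Zsub i) {a b : Z} (ha : a ∈ A) (hb : b ∈ A) :
    ‖gluing Zsub E a - gluing Zsub E b‖ ≤ 18 * ‖a - b‖ := by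
  set s := dyadicSupport ‖a‖ ∪ dyadicSupport ‖b‖
  have hs : (#s : ℝ) ≤ 4 := by exact_mod_cast card_union_dyadicSupport_le ‖a‖ ‖b‖
  rw [gluing_sub_gluing E hZ ha hb]
  calc _ ≤ ∑ i ∈ s, ‖zeroExtend (Zsub i) (E i) (dyadicPiece i a - dyadicPiece i b)‖ :=
        norm_sum_le _ _
    _ = ∑ i ∈ s, ‖dyadicPiece i a - dyadicPiece i b‖ :=
        sum_congr rfl fun i _ => norm_zeroExtend_dyadicPiece_sub E hE hZ ha hb i
    _ ≤ (2 + 4 * #s) * ‖a - b‖ := sum_norm_dyadicPiece_sub_le s a b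
    _ ≤ 18 * ‖a - b‖ := by gcongr; linarith

lemma norm_sub_le_four_mul_norm_gluing_sub {Ysub : ℤ → Submodule ℝ Y}
    (hY : IsMonotoneDecomposition Ysub) (hE : ∀ i z, ‖E i z‖ = ‖(z : Z)‖)
    (hErange : ∀ i z, E i z ∈ Ysub i) {A : Set Z}
    (hZ : ∀ i : ℤ, ∀ a ∈ A, ‖a‖ ≤ 2 ^ i → a ∈ Zsub i) {a b : Z} (ha : a ∈ A) (hb : b ∈ A) :
    ‖a - b‖ ≤ 4 * ‖gluing Zsub E a - gluing Zsub E b‖ := by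
  set s := dyadicSupport ‖a‖ ∪ dyadicSupport ‖b‖
  have hs : (#s : ℝ) ≤ 4 := by exact_mod_cast card_union_dyadicSupport_le ‖a‖ ‖b‖
  have hsupp : ∀ i ∉ s, zeroExtend (Zsub i) (E i) (dyadicPiece i a - dyadicPiece i b) = 0 := by
    intro i hi
    rw [mem_union, not_or] at hi
    rw [dyadicPiece_eq_zero_of_notMem hi.1, dyadicPiece_eq_zero_of_notMem hi.2, sub_zero,
      zeroExtend_zero]
  calc ‖a - b‖ ≤ ∑ i ∈ s, ‖dyadicPiece i a - dyadicPiece i b‖ :=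
        norm_sub_le_sum_norm_dyadicPiece_sub subset_union_left subset_union_right
    _ = ∑ i ∈ s, ‖zeroExtend (Zsub i) (E i) (dyadicPiece i a - dyadicPiece i b)‖ :=
        sum_congr rfl fun i _ => (norm_zeroExtend_dyadicPiece_sub E hE hZ ha hb i).symm
    _ ≤ #s * ‖gluing Zsub E a - gluing Zsub E b‖ := by
        rw [gluing_sub_gluing E hZ ha hb]
        exact hY.sum_norm_le (fun i => zeroExtend_mem (hErange i) _) hsupp
    _ ≤ 4 * ‖gluing Zsub E a - gluing Zsub E b‖ := by gcongr

end Gluing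

theorem gluing_lipschitz_embedding {Z Y : Type*}
    [NormedAddCommGroup Z] [NormedSpace ℝ Z]
    [NormedAddCommGroup Y] [NormedSpace ℝ Y]
    (A : Set Z)
    (Zsub : ℤ → Submodule ℝ Z)
    (hZsub : ∀ i : ℤ, Zsub i = Submodule.span ℝ {a : Z | a ∈ A ∧ ‖a‖ ≤ (2:ℝ) ^ i})
    (Ysub : ℤ → Submodule ℝ Y)
    (hmono : ∀ y : ℤ → Y, (∀ i, y i ∈ Ysub i) → Summable y →
      ∀ j : ℤ, ‖y j‖ ≤ ‖∑' i, y i‖)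
    (E : ∀ i : ℤ, (Zsub i) →ₗ[ℝ] Y)
    (hEiso : ∀ (i : ℤ) (z : Zsub i), ‖E i z‖ = ‖(z : Z)‖)
    (hErange : ∀ (i : ℤ) (z : Zsub i), E i z ∈ Ysub i) :
    ∃ φ : Z → Y,
      φ 0 = 0 ∧
      (∀ a : Z, a ∈ A → ∀ i : ℤ, (2:ℝ) ^ (i - 1) ≤ ‖a‖ → ‖a‖ ≤ (2:ℝ) ^ i →
        ∀ (ha : a ∈ Zsub i) (ha' : a ∈ Zsub (i + 1)),
          φ a = (((2:ℝ) ^ i - ‖a‖) / (2:ℝ) ^ (i - 1)) • E i ⟨a, ha⟩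
              + ((‖a‖ - (2:ℝ) ^ (i - 1)) / (2:ℝ) ^ (i - 1)) • E (i + 1) ⟨a, ha'⟩) ∧
      ∃ c C : ℝ, 0 < c ∧ c ≤ C ∧
        ∀ a ∈ A, ∀ b ∈ A,
          c * ‖a - b‖ ≤ ‖φ a - φ b‖ ∧ ‖φ a - φ b‖ ≤ C * ‖a - b‖ := by
  have hZ : ∀ i : ℤ, ∀ a ∈ A, ‖a‖ ≤ 2 ^ i → a ∈ Zsub i := fun i a ha h =>
    hZsub i ▸ Submodule.subset_span ⟨ha, h⟩
  refine ⟨gluing Zsub E, gluing_zero Zsub E,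
    fun a _ i h₁ h₂ hi hi' => gluing_eq Zsub E h₁ h₂ hi hi', 1 / 4, 18, by norm_num, by norm_num,
    fun a ha b hb => ⟨?_, norm_gluing_sub_le E hEiso hZ ha hb⟩⟩
  linarith [norm_sub_le_four_mul_norm_gluing_sub E hmono hEiso hErange hZ ha hb]
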